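/- Let π be a partition in C(3,3) such that π has at least one odd part. Then there exists a unique m ≥ 0 such that π ∈ C_=(3,3|m). -/

import Mathlib

namespace Bressoud

/-- A partition: a weakly decreasing list of positive integers. -/
structure Partition where
  parts : List ℕ
  pos : ∀ x ∈ parts, 0 < x
  sorted : parts.Pairwise (· ≥ ·)

namespace Partition

/-- `|π|`, the sum of the parts of `π`. -/
def size (π : Partition) : ℕ := π.parts.sum

/-- `ℓ(π)`, the number of parts of `π`. -/
def numParts (π : Partition) : ℕ := π.parts.length

end Partition

lemma exists_pos_not_mem (s : List ℕ) : ∃ n, 0 < n ∧ n ∉ s := by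
  refine ⟨s.sum + 1, Nat.succ_pos _, fun h => ?_⟩
  have := List.single_le_sum (l := s) (fun x _ => Nat.zero_le x) _ h
  omega

/-- The least positive integer not occurring in `s`. -/
def mex1 (s : List ℕ) : ℕ := Nat.find (exists_pos_not_mem s)

/-- Parts `p ≥ q` conflict (must receive different marks) when `p - q ≤ 2`,
with strict inequality when `p` is odd. -/
def conflict (p q : ℕ) : Bool :=
  if p % 2 = 1 then decide (p - q < 2) else decide (p - q ≤ 2)

/-- Greedy computation of the Göllnitz–Gordon marking: the parts are processed
from smallest to largest (second argument: remaining parts in increasing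
order; first argument: already processed parts with their marks), and each
part receives the least positive mark different from the marks of all already
processed conflicting parts. -/
def ggAux : List (ℕ × ℕ) → List ℕ → List (ℕ × ℕ)
  | acc, [] => acc
  | acc, p :: rest =>
      ggAux ((p, mex1 ((acc.filter fun q => conflict p q.1).map Prod.snd)) :: acc) rest

/-- The Göllnitz–Gordon marking `GG(π)` of `π`, as a list of (part, mark)
pairs in decreasing order of parts. -/
def ggMarks (π : Partition) : List (ℕ × ℕ) := ggAux [] π.parts.reverse

/-- There is an `m`-marked part equal to `x` in `GG(π)`. -/
def Marked (π : Partition) (x m : ℕ) : Prop := (x, m) ∈ ggMarks π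

instance (π : Partition) (x m : ℕ) : Decidable (Marked π x m) := by
  unfold Marked; infer_instance

/-- The `i`-th row of `GG(π)`: the `i`-marked parts, in decreasing order. -/
def row (π : Partition) (i : ℕ) : List ℕ :=
  ((ggMarks π).filter fun q => q.2 == i).map Prod.fst

/-- `N_i(π)`: the number of `i`-marked parts of `π`. -/
def Nmk (π : Partition) (i : ℕ) : ℕ := (row π i).length

/-- `π^{(i)}_j` as a natural number (meaningful for `1 ≤ j ≤ N_i(π)`;
junk value `0` otherwise). -/
def nth (π : Partition) (i j : ℕ) : ℕ := (row π i).getD (j - 1) 0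

/-- The canonical embedding of the natural numbers into `EReal`. -/
noncomputable def natE (n : ℕ) : EReal := ((n : ℝ) : EReal)

/-- `π^{(i)}_j` as an extended real, with the conventions `π^{(i)}_0 = +∞`
and `π^{(i)}_j = -∞` for `j > N_i(π)`. -/
noncomputable def rowVal (π : Partition) (i j : ℕ) : EReal :=
  if j = 0 then ⊤
  else
    match (row π i)[j - 1]? with
    | some x => natE x
    | none => ⊥

/-- The largest `l ≥ 0` such that there is no odd part of `π` greater than or
equal to `π^{(2)}_l` (the indices `1 ≤ j ≤ N₂(π)` with this property form an
initial segment, so this is also their number). -/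
def bigL (π : Partition) : ℕ :=
  ((List.range' 1 (Nmk π 2)).filter fun j =>
    decide (∀ x ∈ π.parts, x % 2 = 1 → x < nth π 2 j)).length

/-- `startPair π b = (starting type of π^{(2)}_b, s_b(π))` for `1 ≤ b ≤ N₂(π)`.
Starting types are encoded by integers: `-1` stands for `s₋₁`, and `0,1,2,3`
for `s₀,s₁,s₂,s₃`; the value `9` is a junk value used when no case applies. -/
def startPair (π : Partition) : ℕ → ℤ × ℕ
  | 0 => (9, 0)
  | b + 1 =>
    let v := nth π 2 (b + 1)
    if bigL π < b + 1 then (-1, 0)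
    else
      let okLow : Bool :=
        if b = 0 then !decide ((v + 2) ∈ π.parts)
        else !decide (Marked π (v + 2) 1) || decide ((startPair π b).2 = v + 2)
      let ok2 : Bool :=
        if b = 0 then decide (Marked π (v + 2) 1)
        else decide (Marked π (v + 2) 1) && !decide ((startPair π b).2 = v + 2)
      if decide (Marked π (v - 1) 1) && okLow then (0, v - 1)
      else if decide (Marked π (v - 2) 1) && okLow then (1, v - 2)
      else if ok2 then (2, v + 2)
      else if decide (Marked π v 1) then (3, v)
      else (9, 0)

/-- The starting type of `π^{(2)}_b`, encoded as an integer. -/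
def startType (π : Partition) (b : ℕ) : ℤ := (startPair π b).1

/-- The set `C(k,r)`: partitions with no repeated odd part, in which the parts
equal to `1` and `2` have marks at most `r - 1`, and whose Göllnitz–Gordon
marking has at most `k - 1` rows. -/
def C (k r : ℕ) : Set Partition :=
  { π | (∀ x, x % 2 = 1 → π.parts.count x ≤ 1) ∧
        (∀ x m, Marked π x m → x ≤ 2 → m ≤ r - 1) ∧
        (∀ x m, Marked π x m → m ≤ k - 1) }

/-- The set `C_<(k,r|p,t)`. -/
noncomputable def Clt (k r p t : ℕ) : Set Partition :=
  { π | π ∈ C k r ∧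
        (∀ x ∈ π.parts, x % 2 = 1 → x < 2 * t + 1) ∧
        rowVal π 2 (p + 1) < natE (2 * t + 1) ∧
        natE (2 * t + 1) < rowVal π 2 p ∧
        (rowVal π 2 p = natE (2 * t + 2) →
          startType π p = 2 ∨ startType π p = 3) ∧
        (rowVal π 2 (p + 1) = natE (2 * t) →
          startType π (p + 1) = 0 ∨ startType π (p + 1) = 1) }

/-- The set `C_=(k,r|p,t)`. -/
noncomputable def Ceq (k r p t : ℕ) : Set Partition :=
  { π | π ∈ C k r ∧
        (2 * t + 1) ∈ π.parts ∧
        (∀ x ∈ π.parts, x % 2 = 1 → x ≤ 2 * t + 1) ∧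
        (∀ m, Marked π (2 * t + 1) m → m ≤ 2) ∧
        natE (2 * t + 2) ≤ rowVal π 2 p ∧
        rowVal π 2 (p + 1) ≤ natE (2 * t + 2) ∧
        ((∃ j, 1 ≤ j ∧ j ≤ Nmk π 2 ∧ nth π 2 j = 2 * t + 2 ∧ startType π j = 0) →
          rowVal π 2 (p + 1) = natE (2 * t + 2) ∧
          ∃ i, 1 ≤ i ∧ i ≤ p + 1 ∧
            nth π 2 i = 2 * t + 2 + 4 * (p + 1 - i) ∧
            π.parts.count (2 * t + 2 + 4 * (p + 1 - i)) = 1) ∧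
        ((∃ j, 1 ≤ j ∧ j ≤ Nmk π 2 ∧ nth π 2 j = 2 * t + 2 ∧ startType π j = 2) →
          rowVal π 2 p = natE (2 * t + 2)) ∧
        ((2 * t + 2) ∈ π.parts → ¬ Marked π (2 * t + 2) 2 →
          rowVal π 2 p = natE (2 * t + 4) ∧ startType π p = 3 ∧
          ∃ i, 1 ≤ i ∧ i ≤ p ∧
            nth π 2 i = 2 * t + 4 + 4 * (p - i) ∧
            (2 * t + 4 + 4 * (p - i) + 2) ∉ π.parts) }

/-- The first starting cluster index `p₁` of `π` (with `p₀ = p + 1`): the least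
`j ≥ 1` such that `π^{(2)}_j = π^{(2)}_p + 4(p - j)` and all of
`π^{(2)}_j, …, π^{(2)}_p` have the same starting type as `π^{(2)}_p`. -/
def firstCluster (π : Partition) (p : ℕ) : ℕ :=
  ((List.range' 1 p).filter fun j =>
    (List.range' j (p + 1 - j)).all fun i =>
      decide (nth π 2 i = nth π 2 p + 4 * (p - i)) &&
      decide (startType π i = startType π p)).headD p

/-- The set `ℰ(k,r)` of partitions in `C(k,r)` with no odd parts. -/
def E (k r : ℕ) : Set Partition :=
  { π | π ∈ C k r ∧ ∀ x ∈ π.parts, x % 2 = 0 }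

/-- `C_<(k,r|m) = ⋃_{p+t=m} C_<(k,r|p,t)`. -/
noncomputable def Cltm (k r m : ℕ) : Set Partition :=
  { π | ∃ p t, p + t = m ∧ π ∈ Clt k r p t }

/-- `C_=(k,r|m) = ⋃_{p+t=m} C_=(k,r|p,t)`. -/
noncomputable def Ceqm (k r m : ℕ) : Set Partition :=
  { π | ∃ p t, p + t = m ∧ π ∈ Ceq k r p t }

/-- `I_N`: partitions into distinct odd parts, each at least `2N + 1`. -/
def Iset (N : ℕ) : Set Partition :=
  { ζ | (∀ x ∈ ζ.parts, x % 2 = 1 ∧ 2 * N + 1 ≤ x) ∧ ζ.parts.Nodup }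

/-- `F(3,3)`: pairs `(π, ζ)` with `π ∈ ℰ(3,3)` and `ζ ∈ I_{N₂(π)}`. -/
noncomputable def F33 : Set (Partition × Partition) :=
  { pq | pq.1 ∈ E 3 3 ∧ pq.2 ∈ Iset (Nmk pq.1 2) }

/-!
In `C(3,3)` only the marks 1 and 2 occur, so no three parts can pairwise conflict. With `2t+1`
the largest odd part, this pins the marking down near `2t+1`: the part `2t+1` is 1-marked, a
part `2t+2` occurs at most once and is then 2-marked, and a part `2t+4` next to it is 1-marked.
Hence a 2-marked `2t+2` has starting type `s₀` or `s₂`.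

Conditions (3) say that `p` is a cut of the strictly decreasing second row at `2t+2`. Such a cut
is unique unless `2t+2` itself lies in the row, in which case there are two adjacent cuts, and
conditions (4) and (5) keep exactly the one selected by the starting type of `2t+2`. Since `t`
is determined by `π`, so is `m = p + t`.
-/

lemma mex1_pos (s : List ℕ) : 0 < mex1 s := (Nat.find_spec (exists_pos_not_mem s)).1

lemma mex1_not_mem (s : List ℕ) : mex1 s ∉ s := (Nat.find_spec (exists_pos_not_mem s)).2

lemma mex1_nil : mex1 [] = 1 :=
  le_antisymm (Nat.find_min' _ ⟨one_pos, List.not_mem_nil⟩) (mex1_pos [])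

lemma conflict_eq_true_iff {p q : ℕ} : conflict p q = true ↔ p - q + p % 2 ≤ 2 := by
  unfold conflict
  split <;> simp only [decide_eq_true_eq] <;> omega

def IsGreedyMarking : List (ℕ × ℕ) → Prop
  | [] => True
  | (x, m) :: B => m = mex1 ((B.filter fun q => conflict x q.1).map Prod.snd) ∧ IsGreedyMarking B

namespace IsGreedyMarking

lemma of_append {A B : List (ℕ × ℕ)} (h : IsGreedyMarking (A ++ B)) : IsGreedyMarking B := by
  induction A with
  | nil => exact h
  | cons a A ih => exact ih h.2

lemma mark_eq {A B : List (ℕ × ℕ)} {x m : ℕ} (h : IsGreedyMarking (A ++ (x, m) :: B)) :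
    m = mex1 ((B.filter fun q => conflict x q.1).map Prod.snd) :=
  h.of_append.1

lemma mark_pos {l : List (ℕ × ℕ)} (h : IsGreedyMarking l) {q : ℕ × ℕ} (hq : q ∈ l) :
    0 < q.2 := by
  obtain ⟨A, B, rfl⟩ := List.append_of_mem hq
  rw [h.mark_eq]
  exact mex1_pos _

lemma pairwise {l : List (ℕ × ℕ)} (h : IsGreedyMarking l) :
    l.Pairwise fun a b => conflict a.1 b.1 = true → a.2 ≠ b.2 := by
  induction l with
  | nil => exact List.Pairwise.nil
  | cons a B ih =>
    obtain ⟨x, m⟩ := a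
    refine List.pairwise_cons.2 ⟨fun b hb hc (hm : m = b.2) => ?_, ih h.2⟩
    apply mex1_not_mem ((B.filter fun q => conflict x q.1).map Prod.snd)
    rw [← h.1, hm]
    exact List.mem_map_of_mem (List.mem_filter.2 ⟨hb, hc⟩)

end IsGreedyMarking

lemma isGreedyMarking_ggAux {acc : List (ℕ × ℕ)} (l : List ℕ) (h : IsGreedyMarking acc) :
    IsGreedyMarking (ggAux acc l) := by
  induction l generalizing acc with
  | nil => exact h
  | cons p rest ih => exact ih ⟨rfl, h⟩

lemma isGreedyMarking_ggMarks (π : Partition) : IsGreedyMarking (ggMarks π) :=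
  isGreedyMarking_ggAux _ trivial

lemma ggAux_map_fst (acc : List (ℕ × ℕ)) (l : List ℕ) :
    (ggAux acc l).map Prod.fst = l.reverse ++ acc.map Prod.fst := by
  induction l generalizing acc with
  | nil => simp [ggAux]
  | cons p rest ih => simp [ggAux, ih]

lemma ggMarks_map_fst (π : Partition) : (ggMarks π).map Prod.fst = π.parts := by
  simp [ggMarks, ggAux_map_fst]

lemma ggMarks_pairwise_fst_ge (π : Partition) :
    (ggMarks π).Pairwise fun a b => b.1 ≤ a.1 := by
  have h := π.sorted
  rwa [← ggMarks_map_fst π, List.pairwise_map] at h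

lemma Marked.mem_parts {π : Partition} {x m : ℕ} (h : Marked π x m) : x ∈ π.parts := by
  rw [← ggMarks_map_fst]
  exact List.mem_map_of_mem (f := Prod.fst) h

lemma exists_marked_of_mem {π : Partition} {x : ℕ} (h : x ∈ π.parts) : ∃ m, Marked π x m := by
  rw [← ggMarks_map_fst] at h
  obtain ⟨⟨y, m⟩, hq, rfl⟩ := List.mem_map.1 h
  exact ⟨m, hq⟩

lemma Marked.pos {π : Partition} {x m : ℕ} (h : Marked π x m) : 0 < m :=
  (isGreedyMarking_ggMarks π).mark_pos (q := (x, m)) h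

lemma Marked.ne_of_conflict {π : Partition} {x y m n : ℕ} (hx : Marked π x m)
    (hy : Marked π y n) (hyx : y < x) (hc : conflict x y = true) : m ≠ n := by
  let R : ℕ × ℕ → ℕ × ℕ → Prop := fun a b => b.1 < a.1 → conflict a.1 b.1 = true → a.2 ≠ b.2
  have hR : (ggMarks π).Pairwise fun a b => R a b ∧ R b a :=
    ((isGreedyMarking_ggMarks π).pairwise.and (ggMarks_pairwise_fst_ge π)).imp
      fun h => ⟨fun _ => h.1, fun hlt => absurd h.2 (not_le.2 hlt)⟩
  exact (hR.forall_of_forall_of_flip (fun a _ => ⟨fun h => absurd h (lt_irrefl _),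
    fun h => absurd h (lt_irrefl _)⟩) (hR.imp And.symm) hx hy).1 hyx hc

lemma Marked.eq_one_of_forall_not_conflict {π : Partition} {x m : ℕ} (hx : Marked π x m)
    (hcount : π.parts.count x = 1) (h : ∀ y ∈ π.parts, y < x → conflict x y = false) :
    m = 1 := by
  obtain ⟨A, B, hsplit⟩ := List.append_of_mem hx
  have hgreedy := isGreedyMarking_ggMarks π
  have hsorted := ggMarks_pairwise_fst_ge π
  rw [hsplit] at hgreedy hsorted
  have hfilter : B.filter (fun q => conflict x q.1) = [] := by
    refine List.filter_eq_nil_iff.2 fun q hq hc => ?_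
    have hqx : q.1 ≤ x := (List.pairwise_cons.1 (List.pairwise_append.1 hsorted).2.1).1 q hq
    have hq_mem : q.1 ∈ π.parts := by
      rw [← ggMarks_map_fst, hsplit]
      exact List.mem_map_of_mem (List.mem_append_right _ (List.mem_cons_of_mem _ hq))
    have hqx' : q.1 ≠ x := by
      rintro rfl
      have hB := List.count_pos_iff.2 (List.mem_map_of_mem (f := Prod.fst) hq)
      rw [← ggMarks_map_fst, hsplit, List.map_append, List.map_cons, List.count_append,
        List.count_cons_self] at hcount
      omega
    simp [h q.1 hq_mem (lt_of_le_of_ne hqx hqx')] at hc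
  rw [hgreedy.mark_eq, hfilter]
  exact mex1_nil

section MarksOneTwo

variable {π : Partition} (hπ : π ∈ C 3 3)
include hπ

lemma mark_eq_one_or_two {x m : ℕ} (h : Marked π x m) : m = 1 ∨ m = 2 := by
  have := hπ.2.2 x m h
  have := h.pos
  omega

lemma not_sublist_of_pairwise_conflict {a b c : ℕ} (hab : conflict a b = true)
    (hac : conflict a c = true) (hbc : conflict b c = true) : ¬ [a, b, c].Sublist π.parts := by
  rw [← ggMarks_map_fst, List.sublist_map_iff]
  rintro ⟨L, hL, hLe⟩
  rcases L with _ | ⟨⟨a', ma⟩, _ | ⟨⟨b', mb⟩, _ | ⟨⟨c', mc⟩, _ | _⟩⟩⟩ <;>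
    simp only [List.map_cons, List.map_nil, List.cons.injEq, reduceCtorEq, and_false] at hLe
  obtain ⟨rfl, rfl, rfl, -⟩ := hLe
  have hpair := (isGreedyMarking_ggMarks π).pairwise.sublist hL
  simp only [List.pairwise_cons, List.mem_cons, List.not_mem_nil, forall_eq_or_imp,
    List.Pairwise.nil] at hpair
  have hmarks := fun q (hq : q ∈ [(a, ma), (b, mb), (c, mc)]) =>
    mark_eq_one_or_two hπ (x := q.1) (m := q.2) (hL.subset hq)
  simp only [List.mem_cons, List.not_mem_nil, forall_eq_or_imp] at hmarks
  have hab' := hpair.1.1 hab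
  have hac' := hpair.1.2.1 hac
  have hbc' := hpair.2.1.1 hbc
  omega

lemma not_mem_of_add_one_mem_of_add_two_mem {x : ℕ} (hx : x % 2 = 0) (h1 : x + 1 ∈ π.parts)
    (h2 : x + 2 ∈ π.parts) : x ∉ π.parts := by
  intro h0
  have hsub : [x + 2, x + 1, x].Subperm π.parts :=
    (List.nodup_cons.2 ⟨by simp, List.nodup_cons.2 ⟨by simp, List.nodup_singleton x⟩⟩).subperm
      (by simp [h0, h1, h2])
  refine not_sublist_of_pairwise_conflict hπ (conflict_eq_true_iff.2 (by omega))
    (conflict_eq_true_iff.2 (by omega)) (conflict_eq_true_iff.2 (by omega))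
    (List.sublist_of_subperm_of_pairwise (r := (· ≥ ·)) hsub (by simp) π.sorted)

lemma count_add_one_eq_one {x : ℕ} (hx : x % 2 = 1) (h1 : x ∈ π.parts)
    (h2 : x + 1 ∈ π.parts) : π.parts.count (x + 1) = 1 := by
  have hpos := List.count_pos_iff.2 h2
  by_contra hne
  have hsub : [x + 1, x + 1, x].Subperm π.parts := by
    refine List.subperm_ext_iff.2 fun y hy => ?_
    obtain rfl | rfl : y = x + 1 ∨ y = x := by simpa using hy
    · have hc : [x + 1, x + 1, x].count (x + 1) = 2 := by simp
      omega
    · simpa [List.count_cons] using List.count_pos_iff.2 h1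
  refine not_sublist_of_pairwise_conflict hπ (conflict_eq_true_iff.2 (by omega))
    (conflict_eq_true_iff.2 (by omega)) (conflict_eq_true_iff.2 (by omega))
    (List.sublist_of_subperm_of_pairwise (r := (· ≥ ·)) hsub (by simp) π.sorted)

lemma Marked.three_sub_of_conflict {x y m : ℕ} (hx : Marked π x m) (hy : y ∈ π.parts) (hxy : x < y)
    (hc : conflict y x = true) : Marked π y (3 - m) := by
  obtain ⟨n, hn⟩ := exists_marked_of_mem hy
  have := hn.ne_of_conflict hx hxy hc
  rcases mark_eq_one_or_two hπ hx with rfl | rfl <;>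
    rcases mark_eq_one_or_two hπ hn with rfl | rfl <;> simp_all

end MarksOneTwo

section Rows

variable {π : Partition} {i : ℕ}

lemma mem_row_iff {x : ℕ} : x ∈ row π i ↔ Marked π x i := by
  simp [row, Marked]

lemma row_pairwise (π : Partition) (i : ℕ) : (row π i).Pairwise fun x y => y + 2 ≤ x := by
  have h := (ggMarks_pairwise_fst_ge π).and (isGreedyMarking_ggMarks π).pairwise
  unfold row
  rw [List.pairwise_map]
  refine (h.filter _).imp_of_mem fun {a b} ha hb ⟨hba, hne⟩ => ?_
  simp only [List.mem_filter, beq_iff_eq] at ha hb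
  have hc : ¬ conflict a.1 b.1 = true := fun hc => hne hc (ha.2.trans hb.2.symm)
  rw [conflict_eq_true_iff] at hc
  omega

lemma nth_add_two_le {j k : ℕ} (hj : 1 ≤ j) (hjk : j < k) (hk : k ≤ Nmk π i) :
    nth π i k + 2 ≤ nth π i j := by
  unfold nth Nmk at *
  rw [List.getD_eq_getElem _ _ (by omega), List.getD_eq_getElem _ _ (by omega)]
  exact List.pairwise_iff_getElem.1 (row_pairwise π i) _ _ _ _ (by omega)

lemma rowVal_zero : rowVal π i 0 = ⊤ := rfl

lemma rowVal_of_le {j : ℕ} (hj : 1 ≤ j) (hjN : j ≤ Nmk π i) :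
    rowVal π i j = natE (nth π i j) := by
  unfold rowVal nth Nmk at *
  rw [if_neg (by omega), List.getElem?_eq_getElem (by omega), List.getD_eq_getElem _ _ (by omega)]

lemma rowVal_of_lt {j : ℕ} (hjN : Nmk π i < j) : rowVal π i j = ⊥ := by
  unfold rowVal Nmk at *
  rw [if_neg (by omega), List.getElem?_eq_none (by omega)]

lemma natE_le_natE {a b : ℕ} : natE a ≤ natE b ↔ a ≤ b := by
  simp [natE]

lemma natE_ne_top (a : ℕ) : natE a ≠ ⊤ := EReal.coe_ne_top _

lemma natE_ne_bot (a : ℕ) : natE a ≠ ⊥ := EReal.coe_ne_bot _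

lemma natE_injective : Function.Injective natE := fun a b h => by
  simpa [natE] using h

lemma rowVal_antitone (π : Partition) (i : ℕ) : Antitone (rowVal π i) := by
  refine antitone_nat_of_succ_le fun j => ?_
  rcases Nat.eq_zero_or_pos j with rfl | hj
  · exact le_top
  by_cases hjN : j + 1 ≤ Nmk π i
  · rw [rowVal_of_le (by omega) hjN, rowVal_of_le hj (by omega), natE_le_natE]
    have := nth_add_two_le (π := π) hj (by omega : j < j + 1) hjN
    omega
  · rw [rowVal_of_lt (by omega)]
    exact bot_le

lemma rowVal_eq_natE_iff {j v : ℕ} :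
    rowVal π i j = natE v ↔ 1 ≤ j ∧ j ≤ Nmk π i ∧ nth π i j = v := by
  rcases Nat.eq_zero_or_pos j with rfl | hj
  · simp only [rowVal_zero, (natE_ne_top v).symm, false_iff]
    omega
  by_cases hjN : j ≤ Nmk π i
  · rw [rowVal_of_le hj hjN, natE_injective.eq_iff]
    tauto
  · rw [rowVal_of_lt (by omega)]
    simp only [(natE_ne_bot v).symm, false_iff]
    omega

lemma eq_of_rowVal_eq_natE {j k v : ℕ} (hj : rowVal π i j = natE v) (hk : rowVal π i k = natE v) :
    j = k := by
  obtain ⟨hj1, hjN, rfl⟩ := rowVal_eq_natE_iff.1 hj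
  obtain ⟨hk1, hkN, hkv⟩ := rowVal_eq_natE_iff.1 hk
  rcases lt_trichotomy j k with hjk | rfl | hkj
  · have := nth_add_two_le hj1 hjk hkN
    omega
  · rfl
  · have := nth_add_two_le hk1 hkj hjN
    omega

lemma exists_rowVal_eq_natE_iff {x : ℕ} : (∃ j, rowVal π i j = natE x) ↔ Marked π x i := by
  constructor
  · rintro ⟨j, hj⟩
    obtain ⟨hj1, hjN, rfl⟩ := rowVal_eq_natE_iff.1 hj
    rw [← mem_row_iff, nth, List.getD_eq_getElem _ _ (by unfold Nmk at hjN; omega)]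
    exact List.getElem_mem _
  · intro h
    obtain ⟨k, hk, rfl⟩ := List.getElem_of_mem (mem_row_iff.2 h)
    refine ⟨k + 1, rowVal_eq_natE_iff.2 ⟨by omega, hk, ?_⟩⟩
    simp [nth, List.getElem?_eq_getElem hk]

lemma exists_rowVal_cut (π : Partition) (i v : ℕ) :
    ∃ p, natE v ≤ rowVal π i p ∧ rowVal π i (p + 1) ≤ natE v := by
  have hex : ∃ p, rowVal π i (p + 1) ≤ natE v :=
    ⟨Nmk π i, (rowVal_of_lt (Nat.lt_succ_self _)).trans_le bot_le⟩
  refine ⟨Nat.find hex, ?_, Nat.find_spec hex⟩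
  match h : Nat.find hex with
  | 0 => exact le_top
  | p + 1 => exact le_of_not_ge (Nat.find_min hex (by omega))

lemma eq_add_one_of_rowVal_cut {p p' v : ℕ} (hlt : p < p')
    (hp : rowVal π i (p + 1) ≤ natE v) (hp' : natE v ≤ rowVal π i p') :
    p' = p + 1 ∧ rowVal π i (p + 1) = natE v := by
  have hanti : rowVal π i p' ≤ rowVal π i (p + 1) := rowVal_antitone π i hlt
  have hv : rowVal π i (p + 1) = natE v := le_antisymm hp (hp'.trans hanti)
  exact ⟨eq_of_rowVal_eq_natE (le_antisymm (hanti.trans hp) hp') hv, hv⟩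

end Rows

lemma le_bigL {π : Partition} {q : ℕ} (hq : q ≤ Nmk π 2)
    (h : ∀ j, 1 ≤ j → j ≤ q → ∀ x ∈ π.parts, x % 2 = 1 → x < nth π 2 j) : q ≤ bigL π := by
  have hfilter : (List.range' 1 q).filter
      (fun j => decide (∀ x ∈ π.parts, x % 2 = 1 → x < nth π 2 j)) = List.range' 1 q :=
    List.filter_eq_self.2 fun j hj => decide_eq_true <| by
      obtain ⟨hj1, hjq⟩ := List.mem_range'_1.1 hj
      exact h j hj1 (by omega)
  have hsub := ((List.range'_sublist_right (s := 1) (step := 1)).2 hq).filter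
    (fun j => decide (∀ x ∈ π.parts, x % 2 = 1 → x < nth π 2 j))
  rw [hfilter] at hsub
  simpa [bigL] using hsub.length_le

section LargestOddPart

variable {π : Partition} {t : ℕ} (hπ : π ∈ C 3 3) (h1 : 2 * t + 1 ∈ π.parts)
include hπ h1

lemma marked_two_mul_add_one_one (h2 : 2 * t + 2 ∈ π.parts) : Marked π (2 * t + 1) 1 := by
  have h0 : 2 * t ∉ π.parts := not_mem_of_add_one_mem_of_add_two_mem hπ (by omega) h1 h2
  obtain ⟨m, hm⟩ := exists_marked_of_mem h1
  have hcount : π.parts.count (2 * t + 1) = 1 :=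
    le_antisymm (hπ.1 _ (by omega)) (List.count_pos_iff.2 h1)
  rwa [hm.eq_one_of_forall_not_conflict hcount fun y hy hlt => ?_] at hm
  have hy0 : y ≠ 2 * t := fun h => h0 (h ▸ hy)
  rw [← Bool.not_eq_true, conflict_eq_true_iff]
  omega

lemma marked_two_mul_add_two_two (h2 : 2 * t + 2 ∈ π.parts) : Marked π (2 * t + 2) 2 :=
  (marked_two_mul_add_one_one hπ h1 h2).three_sub_of_conflict hπ h2 (by omega)
    (conflict_eq_true_iff.2 (by omega))

lemma marked_two_mul_add_four_one (h2 : 2 * t + 2 ∈ π.parts) (h4 : 2 * t + 4 ∈ π.parts) :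
    Marked π (2 * t + 4) 1 :=
  (marked_two_mul_add_two_two hπ h1 h2).three_sub_of_conflict hπ h4 (by omega)
    (conflict_eq_true_iff.2 (by omega))

lemma startType_eq_zero_or_two (hmax : ∀ x ∈ π.parts, x % 2 = 1 → x ≤ 2 * t + 1) {q : ℕ}
    (hq : rowVal π 2 q = natE (2 * t + 2)) : startType π q = 0 ∨ startType π q = 2 := by
  obtain ⟨hq1, hqN, hval⟩ := rowVal_eq_natE_iff.1 hq
  have h2 : 2 * t + 2 ∈ π.parts := (exists_rowVal_eq_natE_iff.1 ⟨q, hq⟩).mem_parts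
  have hM1 := marked_two_mul_add_one_one hπ h1 h2
  have h4 : 2 * t + 4 ∈ π.parts ↔ Marked π (2 * t + 4) 1 :=
    ⟨marked_two_mul_add_four_one hπ h1 h2, Marked.mem_parts⟩
  have hbig : ¬ bigL π < q := not_lt.2 <| le_bigL hqN fun j hj hjq x hx hodd => by
    have hle : natE (2 * t + 2) ≤ natE (nth π 2 j) := by
      rw [← hq, ← rowVal_of_le hj (hjq.trans hqN)]
      exact rowVal_antitone π 2 hjq
    have := natE_le_natE.1 hle
    have := hmax x hx hodd
    omega
  obtain ⟨b, rfl⟩ : ∃ b, q = b + 1 := ⟨q - 1, by omega⟩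
  have e1 : 2 * t + 2 - 1 = 2 * t + 1 := by omega
  have e2 : 2 * t + 2 + 2 = 2 * t + 4 := by omega
  -- `2t+1` is 1-marked, so the type is `s₀` unless the test on `2t+4` fails; that failure
  -- means `2t+4` is 1-marked, which is exactly what makes the `s₂` test succeed.
  unfold startType
  rw [startPair]
  simp only [hbig, hval, e1, e2, h4, hM1, if_false]
  split_ifs <;> simp_all

lemma exists_mem_Ceq (hmax : ∀ x ∈ π.parts, x % 2 = 1 → x ≤ 2 * t + 1) :
    ∃ p, π ∈ Ceq 3 3 p t := by
  have hmark : ∀ m, Marked π (2 * t + 1) m → m ≤ 2 := fun m hm => hπ.2.2 _ _ hm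
  by_cases h2 : 2 * t + 2 ∈ π.parts
  · have hM2 := marked_two_mul_add_two_two hπ h1 h2
    obtain ⟨q, hq⟩ := exists_rowVal_eq_natE_iff.2 hM2
    have hq_unique : ∀ j, 1 ≤ j ∧ j ≤ Nmk π 2 ∧ nth π 2 j = 2 * t + 2 → j = q :=
      fun j hj => eq_of_rowVal_eq_natE (rowVal_eq_natE_iff.2 hj) hq
    obtain ⟨p, rfl⟩ : ∃ p, q = p + 1 := ⟨q - 1, by have := (rowVal_eq_natE_iff.1 hq).1; omega⟩
    rcases startType_eq_zero_or_two hπ h1 hmax hq with h0 | h2'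
    · refine ⟨p, hπ, h1, hmax, hmark, hq.ge.trans (rowVal_antitone π 2 p.le_succ), hq.le,
        fun _ => ⟨hq, p + 1, by omega, le_rfl, ?_, ?_⟩, ?_, fun _ h => (h hM2).elim⟩
      · simpa using (rowVal_eq_natE_iff.1 hq).2.2
      · simpa using count_add_one_eq_one hπ (by omega) h1 h2
      · rintro ⟨j, hj1, hjN, hj, hj2⟩
        obtain rfl := hq_unique j ⟨hj1, hjN, hj⟩
        simp [h0] at hj2
    · refine ⟨p + 1, hπ, h1, hmax, hmark, hq.ge, (rowVal_antitone π 2 (p + 1).le_succ).trans hq.le,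
        ?_, fun _ => hq, fun _ h => (h hM2).elim⟩
      rintro ⟨j, hj1, hjN, hj, hj0⟩
      obtain rfl := hq_unique j ⟨hj1, hjN, hj⟩
      simp [h2'] at hj0
  · have hnot : ∀ j, 1 ≤ j → j ≤ Nmk π 2 → nth π 2 j ≠ 2 * t + 2 := fun j hj1 hjN hj =>
      h2 (exists_rowVal_eq_natE_iff.1 ⟨j, rowVal_eq_natE_iff.2 ⟨hj1, hjN, hj⟩⟩).mem_parts
    obtain ⟨p, hp, hp'⟩ := exists_rowVal_cut π 2 (2 * t + 2)
    exact ⟨p, hπ, h1, hmax, hmark, hp, hp', fun ⟨j, hj1, hjN, hj, _⟩ => (hnot j hj1 hjN hj).elim,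
      fun ⟨j, hj1, hjN, hj, _⟩ => (hnot j hj1 hjN hj).elim, fun h => (h2 h).elim⟩

end LargestOddPart

lemma not_lt_of_mem_Ceq {π : Partition} {p p' t : ℕ} (hp : π ∈ Ceq 3 3 p t)
    (hp' : π ∈ Ceq 3 3 p' t) : ¬ p < p' := by
  intro hlt
  obtain ⟨hπ, h1, hmax, -, -, hcut, -, h5, -⟩ := hp
  obtain ⟨-, -, -, -, hcut', -, h4', -, -⟩ := hp'
  obtain ⟨rfl, hq⟩ := eq_add_one_of_rowVal_cut hlt hcut hcut'
  obtain ⟨hq1, hqN, hval⟩ := rowVal_eq_natE_iff.1 hq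
  rcases startType_eq_zero_or_two hπ h1 hmax hq with h0 | h2
  · have := eq_of_rowVal_eq_natE (h4' ⟨p + 1, hq1, hqN, hval, h0⟩).1 hq
    omega
  · have := eq_of_rowVal_eq_natE (h5 ⟨p + 1, hq1, hqN, hval, h2⟩) hq
    omega

lemma exists_largest_odd {l : List ℕ} (h : ∃ x ∈ l, x % 2 = 1) :
    ∃ t, 2 * t + 1 ∈ l ∧ ∀ x ∈ l, x % 2 = 1 → x ≤ 2 * t + 1 := by
  obtain ⟨x, hx, hodd⟩ := h
  obtain ⟨y, hy, hmax⟩ := (l.toFinset.filter (· % 2 = 1)).exists_max_image id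
    ⟨x, by simp [hx, hodd]⟩
  simp only [Finset.mem_filter, List.mem_toFinset, id] at hy hmax
  obtain ⟨t, rfl⟩ : ∃ t, y = 2 * t + 1 := ⟨y / 2, by omega⟩
  exact ⟨t, hy.1, fun x hx hodd => hmax x ⟨hx, hodd⟩⟩

/-- Theorem 5.4: a partition in `C(3,3)` with at least one odd part lies in
`C_=(3,3|m)` for a unique `m`. -/
theorem Ceqm_exists_unique (π : Partition) (hπ : π ∈ C 3 3)
    (hodd : ∃ x ∈ π.parts, x % 2 = 1) :
    ∃! m : ℕ, π ∈ Ceqm 3 3 m := by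
  obtain ⟨t, h1, hmax⟩ := exists_largest_odd hodd
  obtain ⟨p, hp⟩ := exists_mem_Ceq hπ h1 hmax
  refine ⟨p + t, ⟨p, t, rfl, hp⟩, ?_⟩
  rintro _ ⟨p', t', rfl, hp'⟩
  obtain rfl : t' = t := by
    have := hmax _ hp'.2.1 (by omega)
    have := hp'.2.2.1 _ h1 (by omega)
    omega
  rw [le_antisymm (not_lt.1 (not_lt_of_mem_Ceq hp hp')) (not_lt.1 (not_lt_of_mem_Ceq hp' hp))]

end Bressoud
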